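/- arXiv:2404.06319 — 2 statements merged into one kernel-verified Lean document; each statement's English description precedes it below -/
import Mathlib

section
/- The solution set Σ = {x : Ax - |x| = b} is convex if and only if Σ is contained in a single closed orthant, i.e., there exists a sign vector s ∈ {±1}^n such that diag(s)·x ≥ 0 componentwise for every x ∈ Σ. -/
open Matrix

/-- Componentwise absolute value of a vector. -/
noncomputable def absv {n : ℕ} (x : Fin n → ℝ) : Fin n → ℝ := fun i => |x i|

/-- Euclidean norm of a vector. -/
noncomputable def enorm' {n : ℕ} (x : Fin n → ℝ) : ℝ := Real.sqrt (∑ i, x i ^ 2)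

/-- Largest singular value (spectral / operator 2-norm). -/
noncomputable def sigmaMax {n : ℕ} (A : Matrix (Fin n) (Fin n) ℝ) : ℝ :=
  sSup {r | ∃ x : Fin n → ℝ, enorm' x = 1 ∧ r = enorm' (A.mulVec x)}

/-- Smallest singular value. -/
noncomputable def sigmaMin {n : ℕ} (A : Matrix (Fin n) (Fin n) ℝ) : ℝ :=
  sInf {r | ∃ x : Fin n → ℝ, enorm' x = 1 ∧ r = enorm' (A.mulVec x)}

/-- Spectral radius of a real matrix (via its complex spectrum). -/
noncomputable def specRad {n : ℕ} (A : Matrix (Fin n) (Fin n) ℝ) : ENNReal :=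
  spectralRadius ℂ (A.map (Complex.ofReal ·))

lemma abs_eq_sign' {s z : ℝ} (hs : s = 1 ∨ s = -1) (h : 0 ≤ s * z) : |z| = s * z := by
  rcases hs with h1 | h1 <;> subst h1
  · rw [one_mul] at *; exact abs_of_nonneg h
  · rw [neg_one_mul] at *; exact abs_of_nonpos (by linarith)

lemma no_mixed' {n : ℕ} (A : Matrix (Fin n) (Fin n) ℝ) (b : Fin n → ℝ)
    (hC : Convex ℝ {x : Fin n → ℝ | A.mulVec x - absv x = b})
    {x y : Fin n → ℝ} (hx : A.mulVec x - absv x = b) (hy : A.mulVec y - absv y = b)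
    {i : Fin n} (hxi : 0 < x i) (hyi : y i < 0) : False := by
  have hd : 0 < x i - y i := by linarith
  set a : ℝ := -y i / (x i - y i) with ha
  have ha0 : 0 ≤ a := by
    apply div_nonneg <;> linarith
  have ha0' : 0 < a := by
    apply div_pos <;> linarith
  have ha1 : a ≤ 1 := by
    rw [ha, div_le_one hd]; linarith
  have hz := hC hx hy ha0 (by linarith : (0:ℝ) ≤ 1 - a) (by ring)
  have hm : A.mulVec (a • x + (1 - a) • y) = a • A.mulVec x + (1 - a) • A.mulVec y := by
    rw [Matrix.mulVec_add, Matrix.mulVec_smul, Matrix.mulVec_smul]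
  have hzi := congrFun hz i
  have hxi' := congrFun hx i
  have hyi' := congrFun hy i
  simp only [Pi.sub_apply, Pi.add_apply, Pi.smul_apply, smul_eq_mul, absv, hm] at hzi hxi' hyi'
  have hcomb : a * x i + (1 - a) * y i = 0 := by
    have hmul : a * (x i - y i) = -y i := by rw [ha]; exact div_mul_cancel₀ _ (ne_of_gt hd)
    linear_combination hmul
  rw [hcomb, abs_zero] at hzi
  have h1 : a * |x i| + (1 - a) * |y i| = 0 := by
    linear_combination hzi - a * hxi' - (1 - a) * hyi'
  have h2 : 0 < a * |x i| := mul_pos ha0' (abs_pos.mpr (by linarith))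
  have h3 : 0 ≤ (1 - a) * |y i| := mul_nonneg (by linarith) (abs_nonneg _)
  linarith

theorem stmt15 {n : ℕ} (A : Matrix (Fin n) (Fin n) ℝ) (b : Fin n → ℝ) :
    Convex ℝ {x : Fin n → ℝ | A.mulVec x - absv x = b} ↔
      ∃ s : Fin n → ℝ, (∀ i, s i = 1 ∨ s i = -1) ∧
        ∀ x ∈ {x : Fin n → ℝ | A.mulVec x - absv x = b}, ∀ i, 0 ≤ s i * x i := by
  constructor
  · intro hC
    classical
    refine ⟨fun i => if ∀ x ∈ {x : Fin n → ℝ | A.mulVec x - absv x = b}, 0 ≤ x i then 1 else -1,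
      fun i => by dsimp only; split <;> simp, ?_⟩
    intro x hx i
    dsimp only
    by_cases h : ∀ y ∈ {x : Fin n → ℝ | A.mulVec x - absv x = b}, 0 ≤ y i
    · rw [if_pos h, one_mul]
      exact h x hx
    · rw [if_neg h, neg_one_mul, neg_nonneg]
      push_neg at h
      obtain ⟨y, hy, hyi⟩ := h
      by_contra hxi
      push_neg at hxi
      exact no_mixed' A b hC hx hy hxi hyi
  · rintro ⟨s, hs, hsx⟩ x hx y hy a c ha hc hac
    show A.mulVec (a • x + c • y) - absv (a • x + c • y) = b
    have hm : A.mulVec (a • x + c • y) = a • A.mulVec x + c • A.mulVec y := by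
      rw [Matrix.mulVec_add, Matrix.mulVec_smul, Matrix.mulVec_smul]
    funext i
    have hxi := congrFun hx i
    have hyi := congrFun hy i
    simp only [Pi.sub_apply, Pi.add_apply, Pi.smul_apply, smul_eq_mul, absv, hm] at *
    have hax : |x i| = s i * x i := abs_eq_sign' (hs i) (hsx x hx i)
    have hay : |y i| = s i * y i := abs_eq_sign' (hs i) (hsx y hy i)
    have hz : 0 ≤ s i * (a * x i + c * y i) := by
      have : s i * (a * x i + c * y i) = a * (s i * x i) + c * (s i * y i) := by ring
      rw [this]
      exact add_nonneg (mul_nonneg ha (hsx x hx i)) (mul_nonneg hc (hsx y hy i))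
    have haz : |a * x i + c * y i| = s i * (a * x i + c * y i) := abs_eq_sign' (hs i) hz
    rw [haz]
    linear_combination a * hxi + c * hyi + a * hax + c * hay + b i * hac
end

section
/- If A - I is an M-matrix (a Z-matrix with nonnegative inverse), then the matrix (A + I)^{-1}(A - I) is also an M-matrix. -/
open Matrix

/-- An M-matrix: a Z-matrix that is invertible with entrywise nonnegative inverse. -/
def IsMMatrix {n : ℕ} (M : Matrix (Fin n) (Fin n) ℝ) : Prop :=
  (∀ i j, i ≠ j → M i j ≤ 0) ∧ IsUnit M.det ∧ ∀ i j, 0 ≤ M⁻¹ i j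

set_option maxHeartbeats 1000000
section aux18
open Filter
variable {n : ℕ}

lemma mul_nonneg_entry' {X Y : Matrix (Fin n) (Fin n) ℝ}
    (hX : ∀ i j, 0 ≤ X i j) (hY : ∀ i j, 0 ≤ Y i j) :
    ∀ i j, 0 ≤ (X * Y) i j := by
  intro i j
  rw [Matrix.mul_apply]
  exact Finset.sum_nonneg fun l _ => mul_nonneg (hX i l) (hY l j)

lemma one_entry_nonneg (i j : Fin n) : (0:ℝ) ≤ (1 : Matrix (Fin n) (Fin n) ℝ) i j := by
  rw [Matrix.one_apply]; split <;> norm_num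

lemma pow_nonneg_entry' {X : Matrix (Fin n) (Fin n) ℝ}
    (hX : ∀ i j, 0 ≤ X i j) : ∀ k, ∀ i j, 0 ≤ (X ^ k) i j := by
  intro k
  induction k with
  | zero => intro i j; rw [pow_zero]; exact one_entry_nonneg i j
  | succ k ih => rw [pow_succ]; exact mul_nonneg_entry' ih hX

lemma neumann {Q : Matrix (Fin n) (Fin n) ℝ}
    (hsumm : ∀ i j, Summable (fun k => (Q ^ k) i j))
    (htend : ∀ i j, Tendsto (fun k => (Q ^ k) i j) atTop (nhds 0)) :
    (1 - Q) * Matrix.of (fun i j => ∑' k, (Q ^ k) i j) = 1 := by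
  ext i j
  rw [Matrix.mul_apply]
  have hl : ∀ l, (1 - Q) i l * (Matrix.of (fun i j => ∑' k, (Q ^ k) i j)) l j
      = ∑' k, (1 - Q) i l * (Q ^ k) l j := by
    intro l
    simp only [Matrix.of_apply]
    exact (tsum_mul_left).symm
  simp_rw [hl]
  rw [← Summable.tsum_finsetSum (fun l _ => (hsumm l j).mul_left _)]
  have hin : ∀ k, (∑ l, (1 - Q) i l * (Q ^ k) l j) = (Q ^ k) i j - (Q ^ (k+1)) i j := by
    intro k
    have h1 : (∑ l, (1 - Q) i l * (Q ^ k) l j) = ((1 - Q) * Q ^ k) i j :=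
      (Matrix.mul_apply).symm
    rw [h1, Matrix.sub_mul, Matrix.one_mul, ← pow_succ']
    simp [Matrix.sub_apply]
  simp_rw [hin]
  have hsum2 : Summable (fun k => (Q ^ (k+1)) i j) :=
    (summable_nat_add_iff (f := fun k => (Q ^ k) i j) 1).mpr (hsumm i j)
  have hsub : Summable (fun k => (Q ^ k) i j - (Q ^ (k+1)) i j) :=
    (hsumm i j).sub hsum2
  have htel := hsub.hasSum.tendsto_sum_nat
  have hps : ∀ m, (∑ k ∈ Finset.range m, ((Q ^ k) i j - (Q ^ (k+1)) i j))
      = (Q ^ 0) i j - (Q ^ m) i j :=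
    fun m => Finset.sum_range_sub' (fun k => (Q ^ k) i j) m
  rw [funext hps] at htel
  have hlim : Tendsto (fun m => (Q ^ 0) i j - (Q ^ m) i j) atTop
      (nhds ((Q ^ 0) i j - 0)) := tendsto_const_nhds.sub (htend i j)
  have heq := tendsto_nhds_unique htel hlim
  rw [heq, sub_zero, pow_zero]

/-- key lemma: if B is an M-matrix then B + 2 is invertible with nonneg inverse. -/
lemma mmatrix_add_two {B : Matrix (Fin n) (Fin n) ℝ}
    (hdet : IsUnit B.det) (hZ : ∀ i j, i ≠ j → B i j ≤ 0)
    (hinv : ∀ i j, 0 ≤ B⁻¹ i j) :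
    IsUnit (B + 2).det ∧ ∀ i j, 0 ≤ (B + 2)⁻¹ i j := by
  set M := B⁻¹ with hMdef
  have hBM : B * M = 1 := Matrix.mul_nonsing_inv B hdet
  set s : ℝ := 1 + ∑ i, |B i i| with hsdef
  have hs1 : (1:ℝ) ≤ s := by
    have : (0:ℝ) ≤ ∑ i, |B i i| := Finset.sum_nonneg fun i _ => abs_nonneg _
    linarith
  have hs0 : (0:ℝ) < s := by linarith
  have hsd : ∀ i, B i i ≤ s := by
    intro i
    have h1 : |B i i| ≤ ∑ j, |B j j| :=
      Finset.single_le_sum (fun j _ => abs_nonneg (B j j)) (Finset.mem_univ i)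
    have := le_abs_self (B i i)
    linarith
  set N : Matrix (Fin n) (Fin n) ℝ := s • (1 : Matrix (Fin n) (Fin n) ℝ) - B with hNdef
  have hN : ∀ i j, 0 ≤ N i j := by
    intro i j
    by_cases hij : i = j
    · subst hij
      simp only [hNdef, Matrix.sub_apply, Matrix.smul_apply, Matrix.one_apply_eq, smul_eq_mul,
        mul_one]
      linarith [hsd i]
    · simp only [hNdef, Matrix.sub_apply, Matrix.smul_apply, Matrix.one_apply_ne hij,
        smul_eq_mul, mul_zero]
      linarith [hZ i j hij]
  have hNM : N * M = s • M - 1 := by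
    rw [hNdef, Matrix.sub_mul, Matrix.smul_mul, Matrix.one_mul, hBM]
  have hNMn : ∀ i j, 0 ≤ (N * M) i j := mul_nonneg_entry' hN hinv
  have hIle : ∀ i j, (1 : Matrix (Fin n) (Fin n) ℝ) i j ≤ s * M i j := by
    intro i j
    have := hNMn i j
    rw [hNM] at this
    simp only [Matrix.sub_apply, Matrix.smul_apply, smul_eq_mul] at this
    linarith
  have hkey : ∀ k, ∀ i j, (N ^ k) i j ≤ s ^ (k + 1) * M i j := by
    intro k
    induction k with
    | zero =>
      intro i j
      rw [pow_zero, pow_one]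
      exact hIle i j
    | succ k ih =>
      intro i j
      have step1 : (N ^ (k + 1)) i j ≤ s ^ (k + 1) * (N * M) i j := by
        rw [pow_succ', Matrix.mul_apply, Matrix.mul_apply, Finset.mul_sum]
        apply Finset.sum_le_sum
        intro l _
        calc N i l * (N ^ k) l j ≤ N i l * (s ^ (k + 1) * M l j) :=
              mul_le_mul_of_nonneg_left (ih l j) (hN i l)
          _ = s ^ (k + 1) * (N i l * M l j) := by ring
      have hsp : (0:ℝ) ≤ s ^ (k + 1) := le_of_lt (pow_pos hs0 _)
      have step2 : s ^ (k + 1) * (N * M) i j ≤ s ^ (k + 1 + 1) * M i j := by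
        have heq : (N * M) i j = s * M i j - (1 : Matrix (Fin n) (Fin n) ℝ) i j := by
          rw [hNM]; simp [Matrix.sub_apply]
        rw [heq]
        calc s ^ (k + 1) * (s * M i j - (1 : Matrix (Fin n) (Fin n) ℝ) i j)
            ≤ s ^ (k + 1) * (s * M i j) :=
              mul_le_mul_of_nonneg_left (sub_le_self _ (one_entry_nonneg i j)) hsp
          _ = s ^ (k + 1 + 1) * M i j := by rw [pow_succ]; ring
      linarith
  set t : ℝ := s + 2 with htdef
  have ht0 : (0:ℝ) < t := by linarith
  have htne : t ≠ 0 := ne_of_gt ht0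
  set r : ℝ := s / t with hrdef
  have hr0 : (0:ℝ) ≤ r := div_nonneg (le_of_lt hs0) (le_of_lt ht0)
  have hr1 : r < 1 := by
    rw [hrdef, div_lt_one ht0]; linarith
  set Q : Matrix (Fin n) (Fin n) ℝ := t⁻¹ • N with hQdef
  have hQpow : ∀ k, Q ^ k = (t⁻¹) ^ k • N ^ k := by
    intro k; rw [hQdef, smul_pow]
  have hQn : ∀ k i j, 0 ≤ (Q ^ k) i j := by
    intro k i j
    rw [hQpow]
    simp only [Matrix.smul_apply, smul_eq_mul]
    exact mul_nonneg (pow_nonneg (inv_nonneg.mpr (le_of_lt ht0)) k)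
      (pow_nonneg_entry' hN k i j)
  have hQle : ∀ k i j, (Q ^ k) i j ≤ (s * M i j) * r ^ k := by
    intro k i j
    rw [hQpow]
    simp only [Matrix.smul_apply, smul_eq_mul]
    have h1 : (t⁻¹) ^ k * (N ^ k) i j ≤ (t⁻¹) ^ k * (s ^ (k + 1) * M i j) :=
      mul_le_mul_of_nonneg_left (hkey k i j) (pow_nonneg (inv_nonneg.mpr (le_of_lt ht0)) k)
    have h2 : (t⁻¹) ^ k * (s ^ (k + 1) * M i j) = (s * M i j) * r ^ k := by
      rw [hrdef, div_pow, div_eq_mul_inv, ← inv_pow]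
      ring
    linarith
  have hsumm : ∀ i j, Summable (fun k => (Q ^ k) i j) := by
    intro i j
    apply Summable.of_nonneg_of_le (fun k => hQn k i j) (fun k => hQle k i j)
    exact (summable_geometric_of_lt_one hr0 hr1).mul_left _
  have htend : ∀ i j, Tendsto (fun k => (Q ^ k) i j) atTop (nhds 0) := by
    intro i j
    apply squeeze_zero (fun k => hQn k i j) (fun k => hQle k i j)
    rw [show (0:ℝ) = (s * M i j) * 0 by ring]
    exact (tendsto_pow_atTop_nhds_zero_of_lt_one hr0 hr1).const_mul _
  set S : Matrix (Fin n) (Fin n) ℝ := Matrix.of (fun i j => ∑' k, (Q ^ k) i j) with hSdef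
  have hS0 : ∀ i j, 0 ≤ S i j := fun i j => tsum_nonneg (fun k => hQn k i j)
  have hQS : (1 - Q) * S = 1 := by
    rw [hSdef]
    exact neumann hsumm htend
  have h2smul : (2:ℝ) • (1 : Matrix (Fin n) (Fin n) ℝ) = 2 := by
    rw [two_smul, one_add_one_eq_two]
  have hBt : B + 2 = t • (1 - Q) := by
    rw [smul_sub, hQdef, smul_smul, mul_inv_cancel₀ htne, one_smul, hNdef, htdef,
      ← h2smul]
    rw [add_smul]
    abel
  have hright : (B + 2) * (t⁻¹ • S) = 1 := by
    rw [hBt, Matrix.smul_mul, Matrix.mul_smul, smul_smul, mul_inv_cancel₀ htne, one_smul, hQS]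
  refine ⟨Matrix.isUnit_det_of_right_inverse hright, ?_⟩
  intro i j
  rw [Matrix.inv_eq_right_inv hright]
  simp only [Matrix.smul_apply, smul_eq_mul]
  exact mul_nonneg (inv_nonneg.mpr (le_of_lt ht0)) (hS0 i j)


theorem stmt18_aux {n : ℕ} (A : Matrix (Fin n) (Fin n) ℝ)
    (h : (∀ i j, i ≠ j → (A - 1) i j ≤ 0) ∧ IsUnit (A - 1).det ∧ ∀ i j, 0 ≤ (A - 1)⁻¹ i j) :
    (∀ i j, i ≠ j → ((A + 1)⁻¹ * (A - 1)) i j ≤ 0) ∧ IsUnit ((A + 1)⁻¹ * (A - 1)).det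
      ∧ ∀ i j, 0 ≤ ((A + 1)⁻¹ * (A - 1))⁻¹ i j := by
  obtain ⟨hZ, hdet, hinv⟩ := h
  have hA1 : A + 1 = (A - 1) + 2 := by
    rw [sub_add, show (2:Matrix (Fin n) (Fin n) ℝ) = 1 + 1 from (one_add_one_eq_two).symm]
    abel
  obtain ⟨hu2, hp2⟩ := mmatrix_add_two hdet hZ hinv
  rw [← hA1] at hu2 hp2
  have h2smul : (2:ℝ) • (1 : Matrix (Fin n) (Fin n) ℝ) = 2 := by
    rw [two_smul, one_add_one_eq_two]
  have hAm : A - 1 = (A + 1) - 2 := by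
    rw [hA1]; abel
  have hC : (A + 1)⁻¹ * (A - 1) = 1 - (2:ℝ) • (A + 1)⁻¹ := by
    rw [hAm, Matrix.mul_sub, Matrix.nonsing_inv_mul _ hu2, ← h2smul, Matrix.mul_smul,
      Matrix.mul_one]
  refine ⟨?_, ?_, ?_⟩
  · intro i j hij
    rw [hC]
    simp only [Matrix.sub_apply, Matrix.smul_apply, Matrix.one_apply_ne hij, smul_eq_mul]
    have := hp2 i j
    linarith
  · rw [Matrix.det_mul]
    exact (Matrix.isUnit_nonsing_inv_det _ hu2).mul hdet
  · have hCinv : ((A + 1)⁻¹ * (A - 1))⁻¹ = 1 + (2:ℝ) • (A - 1)⁻¹ := by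
      rw [Matrix.mul_inv_rev, Matrix.nonsing_inv_nonsing_inv _ hu2, hA1, Matrix.mul_add,
        Matrix.nonsing_inv_mul _ hdet, ← h2smul, Matrix.mul_smul, Matrix.mul_one]
    intro i j
    rw [hCinv]
    simp only [Matrix.add_apply, Matrix.smul_apply, smul_eq_mul]
    have h1 := one_entry_nonneg (n := n) i j
    have := hinv i j
    linarith

end aux18

theorem stmt18 {n : ℕ} (A : Matrix (Fin n) (Fin n) ℝ) (h : IsMMatrix (A - 1)) :
    IsMMatrix ((A + 1)⁻¹ * (A - 1)) := by
  exact stmt18_aux A h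
end
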